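/- A unit speed curve α: I → ℝ³ with curvature κ > 0 and torsion τ is a slant helix (its principal normal makes a constant angle with some fixed unit vector) if and only if the function σ(s) = (κ²/(κ²+τ²)^{3/2})·(τ/κ)'(s) is constant on I. -/

import Mathlib

/-!
The unit Darboux vector `Ω = (τ T + κ B) / √(κ² + τ²)` satisfies `Ω' = σ (κ T - τ B) = -σ N'`.
So if `σ ≡ c`, then `Ω + c N` is a constant (nonzero) vector whose inner product with `N` is `c`.
Conversely, if `⟪N, d⟫ ≡ cos θ`, then `d ⊥ N'`, hence `⟪Ω, d⟫ ≡ g` is constant and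
`⟪T, d⟫ = g τ / √(κ² + τ²)`; differentiating gives `cos θ = g σ`, while Parseval in the frame
gives `g² + cos² θ = 1`, so `g ≠ 0` and `σ ≡ cos θ / g`.
-/

noncomputable section

/-- The cross product on `ℝ³ = EuclideanSpace ℝ (Fin 3)`. -/
def cross3 (u v : EuclideanSpace ℝ (Fin 3)) : EuclideanSpace ℝ (Fin 3) :=
  WithLp.toLp 2 ![u 1 * v 2 - u 2 * v 1, u 2 * v 0 - u 0 * v 2, u 0 * v 1 - u 1 * v 0]

open scoped RealInnerProductSpace Matrix

theorem cross3_eq_crossProduct (u v : EuclideanSpace ℝ (Fin 3)) :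
    cross3 u v = WithLp.toLp 2 (WithLp.ofLp u ⨯₃ WithLp.ofLp v) := rfl

theorem EuclideanSpace.real_inner_eq_dotProduct {ι : Type*} [Fintype ι]
    (x y : EuclideanSpace ℝ ι) : ⟪x, y⟫ = WithLp.ofLp x ⬝ᵥ WithLp.ofLp y := by
  rw [EuclideanSpace.inner_eq_star_dotProduct, star_trivial, dotProduct_comm]

theorem orthonormal_cross3 {u v : EuclideanSpace ℝ (Fin 3)} (hu : ‖u‖ = 1) (hv : ‖v‖ = 1)
    (huv : ⟪u, v⟫ = 0) : Orthonormal ℝ ![u, v, cross3 u v] := by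
  have huu : ⟪u, u⟫ = 1 := by rw [real_inner_self_eq_norm_sq, hu, one_pow]
  have hvv : ⟪v, v⟫ = 1 := by rw [real_inner_self_eq_norm_sq, hv, one_pow]
  have hvu : ⟪v, u⟫ = 0 := by rw [real_inner_comm, huv]
  rw [orthonormal_iff_ite]
  simp only [EuclideanSpace.real_inner_eq_dotProduct, cross3_eq_crossProduct] at huu hvv huv hvu ⊢
  intro i j
  fin_cases i <;> fin_cases j <;>
    simp [cross_dot_cross, dotProduct_comm (u.ofLp ⨯₃ v.ofLp) u.ofLp,
      dotProduct_comm (u.ofLp ⨯₃ v.ofLp) v.ofLp, huu, hvv, huv, hvu]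

theorem Orthonormal.sum_sq_inner_eq_norm_sq {ι E : Type*} [Fintype ι] [NormedAddCommGroup E]
    [InnerProductSpace ℝ E] [FiniteDimensional ℝ E] {v : ι → E} (hv : Orthonormal ℝ v)
    (hcard : Fintype.card ι = Module.finrank ℝ E) (x : E) :
    ∑ i, ⟪v i, x⟫ ^ 2 = ‖x‖ ^ 2 := by
  simpa using (OrthonormalBasis.mk hv
    (hv.linearIndependent.span_eq_top_of_card_eq_finrank' hcard).ge).sum_sq_inner_right x

theorem Real.sqrt_pow_three {x : ℝ} (hx : 0 ≤ x) : √(x ^ 3) = √x ^ 3 := by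
  rw [show x ^ 3 = (√x ^ 3) ^ 2 by rw [← pow_mul, mul_comm, pow_mul, Real.sq_sqrt hx],
    Real.sqrt_sq (by positivity)]

theorem HasDerivAt.div_sqrt_sq_add_sq {f g : ℝ → ℝ} {f' g' x : ℝ} (hf : HasDerivAt f f' x)
    (hg : HasDerivAt g g' x) (hpos : 0 < f x ^ 2 + g x ^ 2) :
    HasDerivAt (fun t => f t / √(f t ^ 2 + g t ^ 2))
      (g x * (f' * g x - g' * f x) / √(f x ^ 2 + g x ^ 2) ^ 3) x := by
  have hW := Real.sqrt_pos.mpr hpos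
  have hW2 := Real.sq_sqrt hpos.le
  refine (hf.div (((hf.pow 2).add (hg.pow 2)).sqrt hpos.ne') hW.ne').congr_deriv ?_
  simp only [Pi.add_apply, Pi.pow_apply]
  field_simp
  linear_combination 2 * f' * hW2

theorem HasDerivAt.unique_of_eqOn {F : Type*} [NormedAddCommGroup F] [NormedSpace ℝ F]
    {f g : ℝ → F} {f' g' : F} {I : Set ℝ} {s : ℝ} (hI : IsOpen I) (hs : s ∈ I)
    (hfg : Set.EqOn f g I) (hf : HasDerivAt f f' s) (hg : HasDerivAt g g' s) : f' = g' :=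
  (hf.congr_of_eventuallyEq (Filter.eventually_of_mem (hI.mem_nhds hs)
    fun _ ht => (hfg ht).symm)).unique hg

theorem IsOpen.exists_eq_of_hasDerivAt_zero {F : Type*} [NormedAddCommGroup F]
    [NormedSpace ℝ F] {f : ℝ → F} {I : Set ℝ} (hI : IsOpen I) (hI' : IsPreconnected I)
    (hf : ∀ s ∈ I, HasDerivAt f 0 s) : ∃ c, ∀ s ∈ I, f s = c :=
  hI.exists_is_const_of_deriv_eq_zero hI'
    (fun s hs => (hf s hs).differentiableAt.differentiableWithinAt) fun s hs => (hf s hs).deriv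

theorem exists_norm_eq_one_inner_eq_cos {X E : Type*} [NormedAddCommGroup E]
    [InnerProductSpace ℝ E] {S : Set X} {f : X → E} (hf : ∀ s ∈ S, ‖f s‖ = 1) {D : E}
    (hD : D ≠ 0) {c : ℝ} (hc : ∀ s ∈ S, ⟪f s, D⟫ = c) :
    ∃ d : E, ‖d‖ = 1 ∧ ∃ θ : ℝ, ∀ s ∈ S, ⟪f s, d⟫ = Real.cos θ := by
  have hD' : 0 < ‖D‖ := norm_pos_iff.mpr hD
  refine ⟨‖D‖⁻¹ • D, norm_smul_inv_norm hD, Real.arccos (c / ‖D‖), fun s hs => ?_⟩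
  have hcD : |c| ≤ ‖D‖ := by
    simpa [← hc s hs, hf s hs] using abs_real_inner_le_norm (f s) D
  rw [real_inner_smul_right, hc s hs, Real.cos_arccos, inv_mul_eq_div]
  · rw [le_div_iff₀ hD']; linarith [neg_abs_le c]
  · rw [div_le_one hD']; linarith [le_abs_self c]

def slantInvariant (κ τ κ' τ' : ℝ → ℝ) (s : ℝ) : ℝ :=
  (τ' s * κ s - κ' s * τ s) / √(κ s ^ 2 + τ s ^ 2) ^ 3

theorem slantInvariant_eq {κ τ κ' τ' : ℝ → ℝ} {s : ℝ} (hκ : κ s ≠ 0) :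
    κ s ^ 2 / √((κ s ^ 2 + τ s ^ 2) ^ 3) * ((τ' s * κ s - κ' s * τ s) / κ s ^ 2)
      = slantInvariant κ τ κ' τ' s := by
  rw [slantInvariant, Real.sqrt_pow_three (by positivity)]
  field_simp

section Frenet

variable {E : Type*} [NormedAddCommGroup E] [InnerProductSpace ℝ E]
  {I : Set ℝ} {T N B : ℝ → E} {κ τ κ' τ' : ℝ → ℝ} {s : ℝ}

def unitDarboux (κ τ : ℝ → ℝ) (T B : ℝ → E) (t : ℝ) : E :=
  (τ t / √(κ t ^ 2 + τ t ^ 2)) • T t + (κ t / √(κ t ^ 2 + τ t ^ 2)) • B t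

theorem hasDerivAt_torsion_div_sqrt (hκ : HasDerivAt κ (κ' s) s) (hτ : HasDerivAt τ (τ' s) s)
    (hpos : 0 < κ s ^ 2 + τ s ^ 2) :
    HasDerivAt (fun t => τ t / √(κ t ^ 2 + τ t ^ 2)) (κ s * slantInvariant κ τ κ' τ' s) s := by
  have h := hτ.div_sqrt_sq_add_sq hκ (by linarith)
  simp only [add_comm (τ _ ^ 2)] at h
  rw [slantInvariant, ← mul_div_assoc]
  exact h

theorem hasDerivAt_curvature_div_sqrt (hκ : HasDerivAt κ (κ' s) s)
    (hτ : HasDerivAt τ (τ' s) s) (hpos : 0 < κ s ^ 2 + τ s ^ 2) :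
    HasDerivAt (fun t => κ t / √(κ t ^ 2 + τ t ^ 2)) (-τ s * slantInvariant κ τ κ' τ' s) s := by
  refine (hκ.div_sqrt_sq_add_sq hτ hpos).congr_deriv ?_
  rw [slantInvariant]
  ring

theorem hasDerivAt_unitDarboux (hT : HasDerivAt T (κ s • N s) s)
    (hB : HasDerivAt B (-τ s • N s) s) (hκ : HasDerivAt κ (κ' s) s)
    (hτ : HasDerivAt τ (τ' s) s) (hpos : 0 < κ s ^ 2 + τ s ^ 2) :
    HasDerivAt (unitDarboux κ τ T B)
      (slantInvariant κ τ κ' τ' s • (κ s • T s - τ s • B s)) s := by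
  refine (((hasDerivAt_torsion_div_sqrt hκ hτ hpos).smul hT).add
    ((hasDerivAt_curvature_div_sqrt hκ hτ hpos).smul hB)).congr_deriv ?_
  module

theorem inner_unitDarboux_mul_sqrt (hpos : 0 < κ s ^ 2 + τ s ^ 2) (d : E) :
    ⟪unitDarboux κ τ T B s, d⟫ * √(κ s ^ 2 + τ s ^ 2) = τ s * ⟪T s, d⟫ + κ s * ⟪B s, d⟫ := by
  have hW := Real.sqrt_pos.mpr hpos
  rw [unitDarboux, inner_add_left, real_inner_smul_left, real_inner_smul_left]
  field_simp

theorem curvature_mul_inner_eq_torsion_mul_inner (hI : IsOpen I)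
    (hN : ∀ s ∈ I, HasDerivAt N (-κ s • T s + τ s • B s) s) {d : E} {c : ℝ}
    (hc : ∀ s ∈ I, ⟪N s, d⟫ = c) (hs : s ∈ I) : κ s * ⟪T s, d⟫ = τ s * ⟪B s, d⟫ := by
  have h := ((hN s hs).inner ℝ (hasDerivAt_const s d)).unique_of_eqOn hI hs hc
    (hasDerivAt_const s c)
  simp only [inner_zero_right, inner_add_left, real_inner_smul_left, zero_add] at h
  linarith

theorem exists_slantInvariant_eq_of_inner_normal_eq [FiniteDimensional ℝ E]
    (hdim : Module.finrank ℝ E = 3) (hI : IsOpen I) (hI' : IsPreconnected I)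
    (hframe : ∀ s ∈ I, Orthonormal ℝ ![T s, N s, B s]) (hκpos : ∀ s ∈ I, 0 < κ s)
    (hT : ∀ s ∈ I, HasDerivAt T (κ s • N s) s)
    (hN : ∀ s ∈ I, HasDerivAt N (-κ s • T s + τ s • B s) s)
    (hB : ∀ s ∈ I, HasDerivAt B (-τ s • N s) s)
    (hκ : ∀ s ∈ I, HasDerivAt κ (κ' s) s) (hτ : ∀ s ∈ I, HasDerivAt τ (τ' s) s)
    {d : E} (hd : ‖d‖ = 1) {c : ℝ} (hc : ∀ s ∈ I, ⟪N s, d⟫ = c) :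
    ∃ σ : ℝ, ∀ s ∈ I, slantInvariant κ τ κ' τ' s = σ := by
  have hpos : ∀ s ∈ I, 0 < κ s ^ 2 + τ s ^ 2 := fun s hs => by
    have := hκpos s hs; positivity
  have hrel : ∀ s ∈ I, κ s * ⟪T s, d⟫ = τ s * ⟪B s, d⟫ := fun s hs =>
    curvature_mul_inner_eq_torsion_mul_inner hI hN hc hs
  obtain ⟨g, hg⟩ : ∃ g, ∀ s ∈ I, ⟪unitDarboux κ τ T B s, d⟫ = g :=
    hI.exists_eq_of_hasDerivAt_zero hI' fun s hs => by
      refine ((hasDerivAt_unitDarboux (hT s hs) (hB s hs) (hκ s hs) (hτ s hs)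
        (hpos s hs)).inner ℝ (hasDerivAt_const s d)).congr_deriv ?_
      rw [inner_zero_right, zero_add, real_inner_smul_left, inner_sub_left, real_inner_smul_left,
        real_inner_smul_left, hrel s hs, sub_self, mul_zero]
  have hgW : ∀ s ∈ I, g * √(κ s ^ 2 + τ s ^ 2) = τ s * ⟪T s, d⟫ + κ s * ⟪B s, d⟫ :=
    fun s hs => hg s hs ▸ inner_unitDarboux_mul_sqrt (hpos s hs) d
  have hTd : ∀ s ∈ I, ⟪T s, d⟫ = g * (τ s / √(κ s ^ 2 + τ s ^ 2)) := fun s hs => by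
    have hW := Real.sqrt_pos.mpr (hpos s hs)
    rw [← mul_div_assoc, eq_div_iff hW.ne']
    refine mul_right_cancel₀ hW.ne' ?_
    linear_combination ⟪T s, d⟫ * Real.mul_self_sqrt (hpos s hs).le + κ s * hrel s hs
      - τ s * hgW s hs
  refine ⟨c / g, fun s hs => ?_⟩
  have hcg : c = g * slantInvariant κ τ κ' τ' s := by
    have h := ((hT s hs).inner ℝ (hasDerivAt_const s d)).unique_of_eqOn hI hs hTd
      ((hasDerivAt_torsion_div_sqrt (hκ s hs) (hτ s hs) (hpos s hs)).const_mul g)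
    rw [inner_zero_right, zero_add, real_inner_smul_left, hc s hs, mul_left_comm] at h
    exact mul_left_cancel₀ (hκpos s hs).ne' h
  have hg2 : g ^ 2 = ⟪T s, d⟫ ^ 2 + ⟪B s, d⟫ ^ 2 := by
    have hW2 := Real.sq_sqrt (hpos s hs).le
    have h : (g ^ 2 - (⟪T s, d⟫ ^ 2 + ⟪B s, d⟫ ^ 2)) * √(κ s ^ 2 + τ s ^ 2) ^ 2 = 0 := by
      linear_combination (g * √(κ s ^ 2 + τ s ^ 2) + τ s * ⟪T s, d⟫ + κ s * ⟪B s, d⟫) * hgW s hs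
        - (⟪T s, d⟫ ^ 2 + ⟪B s, d⟫ ^ 2) * hW2 - (κ s * ⟪T s, d⟫ - τ s * ⟪B s, d⟫) * hrel s hs
    rw [hW2] at h
    linarith [(mul_eq_zero.mp h).resolve_right (hpos s hs).ne']
  have hparseval := (hframe s hs).sum_sq_inner_eq_norm_sq (by simp [hdim]) d
  simp only [Fin.sum_univ_three, Matrix.cons_val, hd, hc s hs] at hparseval
  have hg0 : g ≠ 0 := by
    rintro rfl
    rw [zero_mul] at hcg
    subst hcg
    linarith
  rw [hcg, mul_div_cancel_left₀ _ hg0]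

theorem exists_inner_normal_eq_cos_of_slantInvariant_eq (hI : IsOpen I)
    (hI' : IsPreconnected I) {s₀ : ℝ} (hs₀ : s₀ ∈ I)
    (hframe : ∀ s ∈ I, Orthonormal ℝ ![T s, N s, B s]) (hκpos : ∀ s ∈ I, 0 < κ s)
    (hT : ∀ s ∈ I, HasDerivAt T (κ s • N s) s)
    (hN : ∀ s ∈ I, HasDerivAt N (-κ s • T s + τ s • B s) s)
    (hB : ∀ s ∈ I, HasDerivAt B (-τ s • N s) s)
    (hκ : ∀ s ∈ I, HasDerivAt κ (κ' s) s) (hτ : ∀ s ∈ I, HasDerivAt τ (τ' s) s)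
    {c : ℝ} (hc : ∀ s ∈ I, slantInvariant κ τ κ' τ' s = c) :
    ∃ d : E, ‖d‖ = 1 ∧ ∃ θ : ℝ, ∀ s ∈ I, ⟪N s, d⟫ = Real.cos θ := by
  have hpos : ∀ s ∈ I, 0 < κ s ^ 2 + τ s ^ 2 := fun s hs => by
    have := hκpos s hs; positivity
  obtain ⟨D, hD⟩ : ∃ D, ∀ s ∈ I, unitDarboux κ τ T B s + c • N s = D :=
    hI.exists_eq_of_hasDerivAt_zero hI' fun s hs => by
      refine ((hasDerivAt_unitDarboux (hT s hs) (hB s hs) (hκ s hs) (hτ s hs)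
        (hpos s hs)).add ((hN s hs).const_smul c)).congr_deriv ?_
      rw [hc s hs]
      module
  have hNT : ∀ s ∈ I, ⟪N s, T s⟫ = 0 := fun s hs => (hframe s hs).2 (by decide : (1 : Fin 3) ≠ 0)
  have hNB : ∀ s ∈ I, ⟪N s, B s⟫ = 0 := fun s hs => (hframe s hs).2 (by decide : (1 : Fin 3) ≠ 2)
  have hBT : ⟪B s₀, T s₀⟫ = 0 := (hframe s₀ hs₀).2 (by decide : (2 : Fin 3) ≠ 0)
  have hBN : ⟪B s₀, N s₀⟫ = 0 := (hframe s₀ hs₀).2 (by decide : (2 : Fin 3) ≠ 1)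
  have hN1 : ∀ s ∈ I, ‖N s‖ = 1 := fun s hs => (hframe s hs).1 1
  refine exists_norm_eq_one_inner_eq_cos hN1 (D := D) (c := c) ?_ fun s hs => ?_
  · rintro rfl
    have hB1 : ‖B s₀‖ = 1 := (hframe s₀ hs₀).1 2
    have h := congr_arg (⟪B s₀, ·⟫) (hD s₀ hs₀)
    simp only [unitDarboux, inner_add_right, real_inner_smul_right, hBT, hBN, inner_zero_right,
      real_inner_self_eq_norm_sq, hB1, mul_zero, one_pow, mul_one, zero_add, add_zero] at h
    exact (div_pos (hκpos s₀ hs₀) (Real.sqrt_pos.mpr (hpos s₀ hs₀))).ne' h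
  · rw [← hD s hs, unitDarboux, inner_add_right, inner_add_right, real_inner_smul_right,
      real_inner_smul_right, real_inner_smul_right, hNT s hs, hNB s hs,
      real_inner_self_eq_norm_sq, hN1 s hs]
    ring

end Frenet

theorem slant_helix_characterization_general
    (I : Set ℝ) (hI : IsOpen I) (hconv : Convex ℝ I) (hne : I.Nonempty)
    (T N B : ℝ → EuclideanSpace ℝ (Fin 3)) (κ τ κ' τ' : ℝ → ℝ)
    (hκpos : ∀ s ∈ I, 0 < κ s)
    (hTunit : ∀ s ∈ I, ‖T s‖ = 1) (hNunit : ∀ s ∈ I, ‖N s‖ = 1)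
    (hTN : ∀ s ∈ I, (inner ℝ (T s) (N s) : ℝ) = 0)
    (hBdef : ∀ s ∈ I, B s = cross3 (T s) (N s))
    (hT : ∀ s ∈ I, HasDerivAt T (κ s • N s) s)
    (hN : ∀ s ∈ I, HasDerivAt N (-(κ s) • T s + τ s • B s) s)
    (hB : ∀ s ∈ I, HasDerivAt B (-(τ s) • N s) s)
    (hκ' : ∀ s ∈ I, HasDerivAt κ (κ' s) s)
    (hτ' : ∀ s ∈ I, HasDerivAt τ (τ' s) s) :
    (∃ d : EuclideanSpace ℝ (Fin 3), ‖d‖ = 1 ∧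
        ∃ θ : ℝ, ∀ s ∈ I, (inner ℝ (N s) d : ℝ) = Real.cos θ)
    ↔ (∃ c : ℝ, ∀ s ∈ I,
        ((κ s) ^ 2 / Real.sqrt (((κ s) ^ 2 + (τ s) ^ 2) ^ 3))
          * ((τ' s * κ s - κ' s * τ s) / (κ s) ^ 2) = c) := by
  obtain ⟨s₀, hs₀⟩ := hne
  have hframe : ∀ s ∈ I, Orthonormal ℝ ![T s, N s, B s] := fun s hs => by
    rw [hBdef s hs]
    exact orthonormal_cross3 (hTunit s hs) (hNunit s hs) (hTN s hs)
  have hσ : ∀ s ∈ I, κ s ^ 2 / √((κ s ^ 2 + τ s ^ 2) ^ 3) * ((τ' s * κ s - κ' s * τ s) / κ s ^ 2)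
      = slantInvariant κ τ κ' τ' s := fun s hs => slantInvariant_eq (hκpos s hs).ne'
  constructor
  · rintro ⟨d, hd, θ, hθ⟩
    obtain ⟨σ, hσc⟩ := exists_slantInvariant_eq_of_inner_normal_eq finrank_euclideanSpace_fin hI
      hconv.isPreconnected hframe hκpos hT hN hB hκ' hτ' hd hθ
    exact ⟨σ, fun s hs => (hσ s hs).trans (hσc s hs)⟩
  · rintro ⟨c, hc⟩
    exact exists_inner_normal_eq_cos_of_slantInvariant_eq hI hconv.isPreconnected hs₀ hframe
      hκpos hT hN hB hκ' hτ' fun s hs => (hσ s hs).symm.trans (hc s hs)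

/-- Izumiya–Takeuchi: A unit speed curve with `κ > 0` is a slant
helix (its principal normal makes a constant angle with a fixed unit vector)
if and only if `σ = (κ²/(κ²+τ²)^{3/2})(τ/κ)'` is constant. -/
theorem slant_helix_characterization
    (I : Set ℝ) (hI : IsOpen I) (hconv : Convex ℝ I) (hne : I.Nonempty)
    (α T N B : ℝ → EuclideanSpace ℝ (Fin 3)) (κ τ κ' τ' : ℝ → ℝ)
    (hα : ∀ s ∈ I, HasDerivAt α (T s) s)
    (hκpos : ∀ s ∈ I, 0 < κ s)
    (hκτpos : ∀ s ∈ I, 0 < (κ s) ^ 2 + (τ s) ^ 2)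
    (hTunit : ∀ s ∈ I, ‖T s‖ = 1) (hNunit : ∀ s ∈ I, ‖N s‖ = 1)
    (hTN : ∀ s ∈ I, (inner ℝ (T s) (N s) : ℝ) = 0)
    (hBdef : ∀ s ∈ I, B s = cross3 (T s) (N s))
    (hT : ∀ s ∈ I, HasDerivAt T (κ s • N s) s)
    (hN : ∀ s ∈ I, HasDerivAt N (-(κ s) • T s + τ s • B s) s)
    (hB : ∀ s ∈ I, HasDerivAt B (-(τ s) • N s) s)
    (hκ' : ∀ s ∈ I, HasDerivAt κ (κ' s) s)
    (hτ' : ∀ s ∈ I, HasDerivAt τ (τ' s) s)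
    (hκ'c : ContinuousOn κ' I) (hτ'c : ContinuousOn τ' I) :
    (∃ d : EuclideanSpace ℝ (Fin 3), ‖d‖ = 1 ∧
        ∃ θ : ℝ, ∀ s ∈ I, (inner ℝ (N s) d : ℝ) = Real.cos θ)
    ↔ (∃ c : ℝ, ∀ s ∈ I,
        ((κ s) ^ 2 / Real.sqrt (((κ s) ^ 2 + (τ s) ^ 2) ^ 3))
          * ((τ' s * κ s - κ' s * τ s) / (κ s) ^ 2) = c) :=
  slant_helix_characterization_general I hI hconv hne T N B κ τ κ' τ' hκpos hTunit hNunit hTN hBdef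
    hT hN hB hκ' hτ'
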